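/- Let X₀, X₁, X₂ be complex Banach spaces, let C > 0, and let σ ∈ ℂ with 0 < |σ| ≤ 1. Suppose given bounded linear operators A_{ij} : X_j → X_i for i, j ∈ {0, 1, 2} with ‖A_{ij}‖ ≤ C, and consider the block operator M : X₀ ⊕ X₁ ⊕ X₂ → X₀ ⊕ X₁ ⊕ X₂ with blocks M₀₀ = A₀₀, M₀₁ = σA₀₁, M₀₂ = σA₀₂, M₁₀ = σA₁₀, M₁₁ = σ²A₁₁, M₁₂ = σ²A₁₂, M₂₀ = σA₂₀, M₂₁ = σ²A₂₁, M₂₂ = σA₂₂. Assume: (i) A₀₀ is a bijection with ‖A₀₀^{-1}‖ ≤ C; (ii) A₂₂♭ := A₂₂ − σ·A₂₀A₀₀^{-1}A₀₂ is a bijection with ‖(A₂₂♭)^{-1}‖ ≤ C; and (iii) A₁₁♮ := (A₁₁ − A₁₀A₀₀^{-1}A₀₁) − σ·(A₁₂ − A₁₀A₀₀^{-1}A₀₂)·(A₂₂♭)^{-1}·(A₂₁ − A₂₀A₀₀^{-1}A₀₁) is a bijection with ‖(A₁₁♮)^{-1}‖ ≤ C. Then M is a bijection, the (1,1)-block of M^{-1}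 equals σ^{-2}·(A₁₁♮)^{-1}, and there is a constant C′ depending only on C such that the blocks (M^{-1})_{ij} satisfy: ‖(M^{-1})₀₀‖, ‖(M^{-1})₀₂‖, ‖(M^{-1})₂₀‖ ≤ C′; ‖(M^{-1})₀₁‖, ‖(M^{-1})₁₀‖, ‖(M^{-1})₁₂‖, ‖(M^{-1})₂₁‖, ‖(M^{-1})₂₂‖ ≤ C′·|σ|^{-1}; and ‖(M^{-1})₁₁‖ ≤ C′·|σ|^{-2}. -/
import Mathlib

universe u v w

open ContinuousLinearMap in
private lemma aux_comp {X : Type*} {Y : Type*} {Z : Type*}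
    [NormedAddCommGroup X] [NormedSpace ℂ X]
    [NormedAddCommGroup Y] [NormedSpace ℂ Y]
    [NormedAddCommGroup Z] [NormedSpace ℂ Z]
    (f : Y →L[ℂ] Z) (g : X →L[ℂ] Y) {a b : ℝ}
    (hf : ‖f‖ ≤ a) (hg : ‖g‖ ≤ b) (ha : 0 ≤ a) : ‖f ∘L g‖ ≤ a * b :=
  (ContinuousLinearMap.opNorm_comp_le f g).trans (mul_le_mul hf hg (norm_nonneg _) ha)

private lemma aux_smul {X : Type*} {Y : Type*}
    [NormedAddCommGroup X] [NormedSpace ℂ X]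
    [NormedAddCommGroup Y] [NormedSpace ℂ Y]
    {c : ℂ} {f : X →L[ℂ] Y} {a : ℝ}
    (hc : ‖c‖ ≤ 1) (hf : ‖f‖ ≤ a) : ‖c • f‖ ≤ a := by
  refine (norm_smul_le c f).trans ?_
  nlinarith [norm_nonneg f, norm_nonneg c]

private lemma aux_fin1 {a b P s : ℝ} (ha : a ≤ P) (hb : b ≤ P) (hs : 1 ≤ s) (hP : 0 ≤ P) :
    a + s * b ≤ 6 * P * s := by
  have h0 : (0:ℝ) ≤ s := le_trans zero_le_one hs
  nlinarith [mul_le_mul_of_nonneg_left hb h0, le_mul_of_one_le_right hP hs, mul_nonneg hP h0]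

private lemma aux_fin2 {a b P s : ℝ} (ha : a ≤ P) (hb : b ≤ P) (hs : 1 ≤ s) (hP : 0 ≤ P) :
    s * b + a ≤ 6 * P * s := by
  have h0 : (0:ℝ) ≤ s := le_trans zero_le_one hs
  nlinarith [mul_le_mul_of_nonneg_left hb h0, le_mul_of_one_le_right hP hs, mul_nonneg hP h0]

private lemma aux_fin3 {b P s : ℝ} (hb : b ≤ P) (hs : 1 ≤ s) (hP : 0 ≤ P) :
    s * b ≤ 6 * P * s := by
  have h0 : (0:ℝ) ≤ s := le_trans zero_le_one hs
  nlinarith [mul_le_mul_of_nonneg_left hb h0, mul_nonneg hP h0]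

set_option maxHeartbeats 40000000 in
/-- Schur-complement inversion of the σ-weighted block operator arising
from the normalized spectral family of the linearized gauge-fixed Einstein operator near zero
energy: under uniform invertibility of the successive Schur complements, the block operator
`M` is bijective, the `(1,1)`-block of its inverse is `σ⁻² (A₁₁♮)⁻¹`, and the remaining
blocks of the inverse obey the indicated `σ`-weights, with constants depending only on `C`. -/
theorem schur_block_inversion (C : ℝ) (hC : 0 < C) :
    ∃ C' : ℝ, 0 < C' ∧
    ∀ (X₀ : Type u) (X₁ : Type v) (X₂ : Type w)
      [NormedAddCommGroup X₀] [NormedSpace ℂ X₀] [CompleteSpace X₀]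
      [NormedAddCommGroup X₁] [NormedSpace ℂ X₁] [CompleteSpace X₁]
      [NormedAddCommGroup X₂] [NormedSpace ℂ X₂] [CompleteSpace X₂]
      (σ : ℂ), σ ≠ 0 → ‖σ‖ ≤ 1 →
      ∀ (A₀₀ : X₀ →L[ℂ] X₀) (A₀₁ : X₁ →L[ℂ] X₀) (A₀₂ : X₂ →L[ℂ] X₀)
        (A₁₀ : X₀ →L[ℂ] X₁) (A₁₁ : X₁ →L[ℂ] X₁) (A₁₂ : X₂ →L[ℂ] X₁)
        (A₂₀ : X₀ →L[ℂ] X₂) (A₂₁ : X₁ →L[ℂ] X₂) (A₂₂ : X₂ →L[ℂ] X₂),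
        ‖A₀₀‖ ≤ C → ‖A₀₁‖ ≤ C → ‖A₀₂‖ ≤ C →
        ‖A₁₀‖ ≤ C → ‖A₁₁‖ ≤ C → ‖A₁₂‖ ≤ C →
        ‖A₂₀‖ ≤ C → ‖A₂₁‖ ≤ C → ‖A₂₂‖ ≤ C →
        ∀ A₀₀i : X₀ →L[ℂ] X₀,
          (∀ v : X₀, A₀₀i (A₀₀ v) = v) → (∀ v : X₀, A₀₀ (A₀₀i v) = v) → ‖A₀₀i‖ ≤ C →
        ∀ A₂₂i : X₂ →L[ℂ] X₂,
          (∀ v : X₂, A₂₂i ((A₂₂ - σ • (A₂₀.comp (A₀₀i.comp A₀₂))) v) = v) →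
          (∀ v : X₂, (A₂₂ - σ • (A₂₀.comp (A₀₀i.comp A₀₂))) (A₂₂i v) = v) →
          ‖A₂₂i‖ ≤ C →
        ∀ A₁₁i : X₁ →L[ℂ] X₁,
          (∀ v : X₁, A₁₁i ((A₁₁ - A₁₀.comp (A₀₀i.comp A₀₁) -
              σ • ((A₁₂ - A₁₀.comp (A₀₀i.comp A₀₂)).comp
                (A₂₂i.comp (A₂₁ - A₂₀.comp (A₀₀i.comp A₀₁))))) v) = v) →
          (∀ v : X₁, (A₁₁ - A₁₀.comp (A₀₀i.comp A₀₁) -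
              σ • ((A₁₂ - A₁₀.comp (A₀₀i.comp A₀₂)).comp
                (A₂₂i.comp (A₂₁ - A₂₀.comp (A₀₀i.comp A₀₁))))) (A₁₁i v) = v) →
          ‖A₁₁i‖ ≤ C →
        ∀ M : X₀ × X₁ × X₂ → X₀ × X₁ × X₂,
          (∀ p : X₀ × X₁ × X₂, M p =
            (A₀₀ p.1 + σ • A₀₁ p.2.1 + σ • A₀₂ p.2.2,
             σ • A₁₀ p.1 + σ ^ 2 • A₁₁ p.2.1 + σ ^ 2 • A₁₂ p.2.2,
             σ • A₂₀ p.1 + σ ^ 2 • A₂₁ p.2.1 + σ • A₂₂ p.2.2)) →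
          Function.Bijective M ∧
          ∃ (B₀₀ : X₀ →L[ℂ] X₀) (B₀₁ : X₁ →L[ℂ] X₀) (B₀₂ : X₂ →L[ℂ] X₀)
            (B₁₀ : X₀ →L[ℂ] X₁) (B₁₁ : X₁ →L[ℂ] X₁) (B₁₂ : X₂ →L[ℂ] X₁)
            (B₂₀ : X₀ →L[ℂ] X₂) (B₂₁ : X₁ →L[ℂ] X₂) (B₂₂ : X₂ →L[ℂ] X₂),
            B₁₁ = (σ ^ 2)⁻¹ • A₁₁i ∧
            (∀ p : X₀ × X₁ × X₂,
              M (B₀₀ p.1 + B₀₁ p.2.1 + B₀₂ p.2.2,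
                 B₁₀ p.1 + B₁₁ p.2.1 + B₁₂ p.2.2,
                 B₂₀ p.1 + B₂₁ p.2.1 + B₂₂ p.2.2) = p) ∧
            (∀ p : X₀ × X₁ × X₂,
              (B₀₀ (M p).1 + B₀₁ (M p).2.1 + B₀₂ (M p).2.2,
               B₁₀ (M p).1 + B₁₁ (M p).2.1 + B₁₂ (M p).2.2,
               B₂₀ (M p).1 + B₂₁ (M p).2.1 + B₂₂ (M p).2.2) = p) ∧
            ‖B₀₀‖ ≤ C' ∧ ‖B₀₂‖ ≤ C' ∧ ‖B₂₀‖ ≤ C' ∧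
            ‖B₀₁‖ ≤ C' * ‖σ‖⁻¹ ∧ ‖B₁₀‖ ≤ C' * ‖σ‖⁻¹ ∧ ‖B₁₂‖ ≤ C' * ‖σ‖⁻¹ ∧
            ‖B₂₁‖ ≤ C' * ‖σ‖⁻¹ ∧ ‖B₂₂‖ ≤ C' * ‖σ‖⁻¹ ∧
            ‖B₁₁‖ ≤ C' * (‖σ‖ ^ 2)⁻¹ := by
  refine ⟨6 * (C + 1) ^ 15, by positivity, ?_⟩
  intro X₀ X₁ X₂ _ _ _ _ _ _ _ _ _ σ hσ hσ1
  intro A₀₀ A₀₁ A₀₂ A₁₀ A₁₁ A₁₂ A₂₀ A₂₁ A₂₂ hn00 hn01 hn02 hn10 hn11 hn12 hn20 hn21 hn22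
  intro E hEl hEr hnE F hFl hFr hnF T hTl hTr hnT M hM
  -- expanded versions of the inverse identities
  have hFl' : ∀ v : X₂, F (A₂₂ v) = v + σ • F (A₂₀ (E (A₀₂ v))) := by
    intro v
    have h := hFl v
    simp only [ContinuousLinearMap.sub_apply, ContinuousLinearMap.smul_apply,
      ContinuousLinearMap.comp_apply, map_sub, map_smul] at h
    linear_combination (norm := module) h
  have hFr' : ∀ v : X₂, A₂₂ (F v) = v + σ • A₂₀ (E (A₀₂ (F v))) := by
    intro v
    have h := hFr v
    simp only [ContinuousLinearMap.sub_apply, ContinuousLinearMap.smul_apply,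
      ContinuousLinearMap.comp_apply, map_sub, map_smul] at h
    linear_combination (norm := module) h
  have hTl' : ∀ v : X₁, T (A₁₁ v) = v + T (A₁₀ (E (A₀₁ v)))
      + σ • T (A₁₂ (F (A₂₁ v))) - σ • T (A₁₂ (F (A₂₀ (E (A₀₁ v)))))
      - σ • T (A₁₀ (E (A₀₂ (F (A₂₁ v)))))
      + σ • T (A₁₀ (E (A₀₂ (F (A₂₀ (E (A₀₁ v))))))) := by
    intro v
    have h := hTl v
    simp only [ContinuousLinearMap.sub_apply, ContinuousLinearMap.smul_apply,
      ContinuousLinearMap.comp_apply, map_sub, map_smul] at h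
    linear_combination (norm := module) h
  have hTr' : ∀ v : X₁, A₁₁ (T v) = v + A₁₀ (E (A₀₁ (T v)))
      + σ • A₁₂ (F (A₂₁ (T v))) - σ • A₁₂ (F (A₂₀ (E (A₀₁ (T v)))))
      - σ • A₁₀ (E (A₀₂ (F (A₂₁ (T v)))))
      + σ • A₁₀ (E (A₀₂ (F (A₂₀ (E (A₀₁ (T v))))))) := by
    intro v
    have h := hTr v
    simp only [ContinuousLinearMap.sub_apply, ContinuousLinearMap.smul_apply,
      ContinuousLinearMap.comp_apply, map_sub, map_smul] at h
    linear_combination (norm := module) h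
  -- scalar simplification facts
  have s1 : σ * σ⁻¹ = 1 := mul_inv_cancel₀ hσ
  have s2 : σ⁻¹ * σ = 1 := inv_mul_cancel₀ hσ
  have s4 : ∀ a : ℂ, σ * (σ⁻¹ * a) = a := fun a => by rw [← mul_assoc, s1, one_mul]
  have s5 : ∀ a : ℂ, σ⁻¹ * (σ * a) = a := fun a => by rw [← mul_assoc, s2, one_mul]
  have s3 : (σ ^ 2)⁻¹ = σ⁻¹ * σ⁻¹ := by rw [sq, mul_inv]
  have s6 : σ ^ 2 = σ * σ := sq σ
  -- the blocks of the inverse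
  obtain ⟨U', hU'⟩ : ∃ W : X₂ →L[ℂ] X₁, W = A₁₂ - A₁₀ ∘L (E ∘L A₀₂) := ⟨_, rfl⟩
  obtain ⟨V', hV'⟩ : ∃ W : X₁ →L[ℂ] X₂, W = A₂₁ - A₂₀ ∘L (E ∘L A₀₁) := ⟨_, rfl⟩
  obtain ⟨K1, hK1⟩ : ∃ W : X₀ →L[ℂ] X₁, W = T ∘L (A₁₀ ∘L E) := ⟨_, rfl⟩
  obtain ⟨K2, hK2⟩ : ∃ W : X₂ →L[ℂ] X₁, W = T ∘L (U' ∘L F) := ⟨_, rfl⟩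
  obtain ⟨L1, hL1⟩ : ∃ W : X₁ →L[ℂ] X₂, W = F ∘L (V' ∘L T) := ⟨_, rfl⟩
  obtain ⟨B₀₀, hB₀₀⟩ : ∃ W : X₀ →L[ℂ] X₀, W =
      E + E ∘L (A₀₁ ∘L K1) - σ • (E ∘L (A₀₁ ∘L (K2 ∘L (A₂₀ ∘L E))))
      + σ • (E ∘L (A₀₂ ∘L (F ∘L (A₂₀ ∘L E)))) - σ • (E ∘L (A₀₂ ∘L (L1 ∘L (A₁₀ ∘L E))))
      + σ ^ 2 • (E ∘L (A₀₂ ∘L (L1 ∘L (U' ∘L (F ∘L (A₂₀ ∘L E)))))) := ⟨_, rfl⟩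
  obtain ⟨B₀₁, hB₀₁⟩ : ∃ W : X₁ →L[ℂ] X₀, W =
      E ∘L (A₀₂ ∘L L1) - σ⁻¹ • (E ∘L (A₀₁ ∘L T)) := ⟨_, rfl⟩
  obtain ⟨B₀₂, hB₀₂⟩ : ∃ W : X₂ →L[ℂ] X₀, W =
      E ∘L (A₀₁ ∘L K2) - E ∘L (A₀₂ ∘L F) - σ • (E ∘L (A₀₂ ∘L (L1 ∘L (U' ∘L F)))) := ⟨_, rfl⟩
  obtain ⟨B₁₀, hB₁₀⟩ : ∃ W : X₀ →L[ℂ] X₁, W =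
      K2 ∘L (A₂₀ ∘L E) - σ⁻¹ • K1 := ⟨_, rfl⟩
  obtain ⟨B₁₁, hB₁₁⟩ : ∃ W : X₁ →L[ℂ] X₁, W = (σ ^ 2)⁻¹ • T := ⟨_, rfl⟩
  obtain ⟨B₁₂, hB₁₂⟩ : ∃ W : X₂ →L[ℂ] X₁, W = -(σ⁻¹ • K2) := ⟨_, rfl⟩
  obtain ⟨B₂₀, hB₂₀⟩ : ∃ W : X₀ →L[ℂ] X₂, W =
      L1 ∘L (A₁₀ ∘L E) - F ∘L (A₂₀ ∘L E) - σ • (L1 ∘L (U' ∘L (F ∘L (A₂₀ ∘L E)))) := ⟨_, rfl⟩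
  obtain ⟨B₂₁, hB₂₁⟩ : ∃ W : X₁ →L[ℂ] X₂, W = -(σ⁻¹ • L1) := ⟨_, rfl⟩
  obtain ⟨B₂₂, hB₂₂⟩ : ∃ W : X₂ →L[ℂ] X₂, W = σ⁻¹ • F + L1 ∘L (U' ∘L F) := ⟨_, rfl⟩
  have hfwd0 : ∀ x : X₀, ∀ y : X₁, ∀ z : X₂,
      A₀₀ (B₀₀ x + B₀₁ y + B₀₂ z) + σ • A₀₁ (B₁₀ x + B₁₁ y + B₁₂ z)
        + σ • A₀₂ (B₂₀ x + B₂₁ y + B₂₂ z) = x := by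
    intro x y z
    simp only [hB₀₀, hB₀₁, hB₀₂, hB₁₀, hB₁₁, hB₁₂, hB₂₀, hB₂₁, hB₂₂, hU', hV', hK1, hK2, hL1,
      ContinuousLinearMap.add_apply, ContinuousLinearMap.sub_apply,
      ContinuousLinearMap.smul_apply, ContinuousLinearMap.neg_apply,
      ContinuousLinearMap.comp_apply, map_add, map_sub, map_smul, map_neg,
      smul_add, smul_sub, smul_neg, smul_smul,
      hEr, hFr', hTr', s1, s2, s4, s5, s3, s6, mul_assoc, mul_one, one_mul, one_smul]
    match_scalars <;> (try field_simp) <;> (try ring)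
  have hfwd1 : ∀ x : X₀, ∀ y : X₁, ∀ z : X₂,
      σ • A₁₀ (B₀₀ x + B₀₁ y + B₀₂ z) + σ ^ 2 • A₁₁ (B₁₀ x + B₁₁ y + B₁₂ z)
        + σ ^ 2 • A₁₂ (B₂₀ x + B₂₁ y + B₂₂ z) = y := by
    intro x y z
    simp only [hB₀₀, hB₀₁, hB₀₂, hB₁₀, hB₁₁, hB₁₂, hB₂₀, hB₂₁, hB₂₂, hU', hV', hK1, hK2, hL1,
      ContinuousLinearMap.add_apply, ContinuousLinearMap.sub_apply,
      ContinuousLinearMap.smul_apply, ContinuousLinearMap.neg_apply,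
      ContinuousLinearMap.comp_apply, map_add, map_sub, map_smul, map_neg,
      smul_add, smul_sub, smul_neg, smul_smul,
      hEr, hFr', hTr', s1, s2, s4, s5, s3, s6, mul_assoc, mul_one, one_mul, one_smul]
    match_scalars <;> (try field_simp) <;> (try ring)
  have hfwd2 : ∀ x : X₀, ∀ y : X₁, ∀ z : X₂,
      σ • A₂₀ (B₀₀ x + B₀₁ y + B₀₂ z) + σ ^ 2 • A₂₁ (B₁₀ x + B₁₁ y + B₁₂ z)
        + σ • A₂₂ (B₂₀ x + B₂₁ y + B₂₂ z) = z := by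
    intro x y z
    simp only [hB₀₀, hB₀₁, hB₀₂, hB₁₀, hB₁₁, hB₁₂, hB₂₀, hB₂₁, hB₂₂, hU', hV', hK1, hK2, hL1,
      ContinuousLinearMap.add_apply, ContinuousLinearMap.sub_apply,
      ContinuousLinearMap.smul_apply, ContinuousLinearMap.neg_apply,
      ContinuousLinearMap.comp_apply, map_add, map_sub, map_smul, map_neg,
      smul_add, smul_sub, smul_neg, smul_smul,
      hEr, hFr', hTr', s1, s2, s4, s5, s3, s6, mul_assoc, mul_one, one_mul, one_smul]
    match_scalars <;> (try field_simp) <;> (try ring)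
  have hbwd0 : ∀ x : X₀, ∀ y : X₁, ∀ z : X₂,
      B₀₀ (A₀₀ x + σ • A₀₁ y + σ • A₀₂ z)
        + B₀₁ (σ • A₁₀ x + σ ^ 2 • A₁₁ y + σ ^ 2 • A₁₂ z)
        + B₀₂ (σ • A₂₀ x + σ ^ 2 • A₂₁ y + σ • A₂₂ z) = x := by
    intro x y z
    simp only [hB₀₀, hB₀₁, hB₀₂, hB₁₀, hB₁₁, hB₁₂, hB₂₀, hB₂₁, hB₂₂, hU', hV', hK1, hK2, hL1,
      ContinuousLinearMap.add_apply, ContinuousLinearMap.sub_apply,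
      ContinuousLinearMap.smul_apply, ContinuousLinearMap.neg_apply,
      ContinuousLinearMap.comp_apply, map_add, map_sub, map_smul, map_neg,
      smul_add, smul_sub, smul_neg, smul_smul,
      hEl, hFl', hTl', s1, s2, s4, s5, s3, s6, mul_assoc, mul_one, one_mul, one_smul]
    match_scalars <;> (try field_simp) <;> (try ring)
  have hbwd1 : ∀ x : X₀, ∀ y : X₁, ∀ z : X₂,
      B₁₀ (A₀₀ x + σ • A₀₁ y + σ • A₀₂ z)
        + B₁₁ (σ • A₁₀ x + σ ^ 2 • A₁₁ y + σ ^ 2 • A₁₂ z)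
        + B₁₂ (σ • A₂₀ x + σ ^ 2 • A₂₁ y + σ • A₂₂ z) = y := by
    intro x y z
    simp only [hB₀₀, hB₀₁, hB₀₂, hB₁₀, hB₁₁, hB₁₂, hB₂₀, hB₂₁, hB₂₂, hU', hV', hK1, hK2, hL1,
      ContinuousLinearMap.add_apply, ContinuousLinearMap.sub_apply,
      ContinuousLinearMap.smul_apply, ContinuousLinearMap.neg_apply,
      ContinuousLinearMap.comp_apply, map_add, map_sub, map_smul, map_neg,
      smul_add, smul_sub, smul_neg, smul_smul,
      hEl, hFl', hTl', s1, s2, s4, s5, s3, s6, mul_assoc, mul_one, one_mul, one_smul]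
    match_scalars <;> (try field_simp) <;> (try ring)
  have hbwd2 : ∀ x : X₀, ∀ y : X₁, ∀ z : X₂,
      B₂₀ (A₀₀ x + σ • A₀₁ y + σ • A₀₂ z)
        + B₂₁ (σ • A₁₀ x + σ ^ 2 • A₁₁ y + σ ^ 2 • A₁₂ z)
        + B₂₂ (σ • A₂₀ x + σ ^ 2 • A₂₁ y + σ • A₂₂ z) = z := by
    intro x y z
    simp only [hB₀₀, hB₀₁, hB₀₂, hB₁₀, hB₁₁, hB₁₂, hB₂₀, hB₂₁, hB₂₂, hU', hV', hK1, hK2, hL1,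
      ContinuousLinearMap.add_apply, ContinuousLinearMap.sub_apply,
      ContinuousLinearMap.smul_apply, ContinuousLinearMap.neg_apply,
      ContinuousLinearMap.comp_apply, map_add, map_sub, map_smul, map_neg,
      smul_add, smul_sub, smul_neg, smul_smul,
      hEl, hFl', hTl', s1, s2, s4, s5, s3, s6, mul_assoc, mul_one, one_mul, one_smul]
    match_scalars <;> (try field_simp) <;> (try ring)
  -- packaged inverse identities
  have hfwd : ∀ p : X₀ × X₁ × X₂,
      M (B₀₀ p.1 + B₀₁ p.2.1 + B₀₂ p.2.2, B₁₀ p.1 + B₁₁ p.2.1 + B₁₂ p.2.2,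
        B₂₀ p.1 + B₂₁ p.2.1 + B₂₂ p.2.2) = p := by
    intro p
    obtain ⟨x, y, z⟩ := p
    rw [hM]
    simp only [Prod.mk.injEq]
    exact ⟨hfwd0 x y z, hfwd1 x y z, hfwd2 x y z⟩
  have hbwd : ∀ p : X₀ × X₁ × X₂,
      (B₀₀ (M p).1 + B₀₁ (M p).2.1 + B₀₂ (M p).2.2,
       B₁₀ (M p).1 + B₁₁ (M p).2.1 + B₁₂ (M p).2.2,
       B₂₀ (M p).1 + B₂₁ (M p).2.1 + B₂₂ (M p).2.2) = p := by
    intro p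
    obtain ⟨x, y, z⟩ := p
    rw [hM]
    simp only [Prod.mk.injEq]
    exact ⟨hbwd0 x y z, hbwd1 x y z, hbwd2 x y z⟩
  -- norm estimates
  have hD0 : (0:ℝ) ≤ C + 1 := by linarith
  have hD1 : (1:ℝ) ≤ C + 1 := by linarith
  have hDk : ∀ k : ℕ, (0:ℝ) ≤ (C + 1) ^ k := fun k => pow_nonneg hD0 k
  have hp : ∀ k : ℕ, k ≤ 15 → (C + 1) ^ k ≤ (C + 1) ^ 15 :=
    fun k hk => pow_le_pow_right₀ hD1 hk
  have hone : ∀ k : ℕ, (1:ℝ) ≤ (C + 1) ^ k := fun k => by simpa using pow_le_pow_right₀ hD1 (Nat.zero_le k)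
  have hσpos : 0 < ‖σ‖ := norm_pos_iff.mpr hσ
  have hinv : 1 ≤ ‖σ‖⁻¹ := by
    have h := mul_inv_cancel₀ (ne_of_gt hσpos)
    nlinarith [inv_nonneg.mpr (le_of_lt hσpos)]
  have hinv0 : (0:ℝ) ≤ ‖σ‖⁻¹ := inv_nonneg.mpr (norm_nonneg σ)
  have hσ2 : ‖σ ^ 2‖ ≤ 1 := by rw [norm_pow]; nlinarith [norm_nonneg σ]
  have hn00' : ‖A₀₀‖ ≤ C + 1 := by linarith
  have hn01' : ‖A₀₁‖ ≤ C + 1 := by linarith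
  have hn02' : ‖A₀₂‖ ≤ C + 1 := by linarith
  have hn10' : ‖A₁₀‖ ≤ C + 1 := by linarith
  have hn11' : ‖A₁₁‖ ≤ C + 1 := by linarith
  have hn12' : ‖A₁₂‖ ≤ C + 1 := by linarith
  have hn20' : ‖A₂₀‖ ≤ C + 1 := by linarith
  have hn21' : ‖A₂₁‖ ≤ C + 1 := by linarith
  have hn22' : ‖A₂₂‖ ≤ C + 1 := by linarith
  have hnE' : ‖E‖ ≤ C + 1 := by linarith
  have hnF' : ‖F‖ ≤ C + 1 := by linarith
  have hnT' : ‖T‖ ≤ C + 1 := by linarith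
  have hU'n : ‖U'‖ ≤ (C + 1) ^ 4 := by
    rw [hU']
    have h1 : ‖A₁₀.comp (E.comp A₀₂)‖ ≤ (C + 1) * ((C + 1) * (C + 1)) :=
      aux_comp _ _ hn10' (aux_comp _ _ hnE' hn02' hD0) hD0
    have h2 := norm_sub_le A₁₂ (A₁₀.comp (E.comp A₀₂))
    nlinarith [mul_le_mul_of_nonneg_left (hone 3) hC.le]
  have hV'n : ‖V'‖ ≤ (C + 1) ^ 4 := by
    rw [hV']
    have h1 : ‖A₂₀.comp (E.comp A₀₁)‖ ≤ (C + 1) * ((C + 1) * (C + 1)) :=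
      aux_comp _ _ hn20' (aux_comp _ _ hnE' hn01' hD0) hD0
    have h2 := norm_sub_le A₂₁ (A₂₀.comp (E.comp A₀₁))
    nlinarith [mul_le_mul_of_nonneg_left (hone 3) hC.le]
  have hK1n : ‖K1‖ ≤ (C + 1) ^ 3 := by
    rw [hK1]
    exact (aux_comp _ _ hnT' (aux_comp _ _ hn10' hnE' hD0) hD0).trans (le_of_eq (by ring))
  have hK2n : ‖K2‖ ≤ (C + 1) ^ 6 := by
    rw [hK2]
    exact (aux_comp _ _ hnT' (aux_comp _ _ hU'n hnF' (hDk 4)) hD0).trans (le_of_eq (by ring))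
  have hL1n : ‖L1‖ ≤ (C + 1) ^ 6 := by
    rw [hL1]
    exact (aux_comp _ _ hnF' (aux_comp _ _ hV'n hnT' (hDk 4)) hD0).trans (le_of_eq (by ring))
  have hnB₀₀ : ‖B₀₀‖ ≤ 6 * (C + 1) ^ 15 := by
    have hb2 : ‖E ∘L (A₀₁ ∘L K1)‖ ≤ (C + 1) ^ 5 :=
      (aux_comp _ _ hnE' (aux_comp _ _ hn01' hK1n hD0) hD0).trans (le_of_eq (by ring))
    have hb3 : ‖σ • (E ∘L (A₀₁ ∘L (K2 ∘L (A₂₀ ∘L E))))‖ ≤ (C + 1) ^ 10 :=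
      aux_smul hσ1 ((aux_comp _ _ hnE' (aux_comp _ _ hn01'
        (aux_comp _ _ hK2n (aux_comp _ _ hn20' hnE' hD0) (hDk 6)) hD0) hD0).trans
        (le_of_eq (by ring)))
    have hb4 : ‖σ • (E ∘L (A₀₂ ∘L (F ∘L (A₂₀ ∘L E))))‖ ≤ (C + 1) ^ 5 :=
      aux_smul hσ1 ((aux_comp _ _ hnE' (aux_comp _ _ hn02'
        (aux_comp _ _ hnF' (aux_comp _ _ hn20' hnE' hD0) hD0) hD0) hD0).trans
        (le_of_eq (by ring)))
    have hb5 : ‖σ • (E ∘L (A₀₂ ∘L (L1 ∘L (A₁₀ ∘L E))))‖ ≤ (C + 1) ^ 10 :=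
      aux_smul hσ1 ((aux_comp _ _ hnE' (aux_comp _ _ hn02'
        (aux_comp _ _ hL1n (aux_comp _ _ hn10' hnE' hD0) (hDk 6)) hD0) hD0).trans
        (le_of_eq (by ring)))
    have hb6 : ‖σ ^ 2 • (E ∘L (A₀₂ ∘L (L1 ∘L (U' ∘L (F ∘L (A₂₀ ∘L E))))))‖ ≤ (C + 1) ^ 15 :=
      aux_smul hσ2 ((aux_comp _ _ hnE' (aux_comp _ _ hn02'
        (aux_comp _ _ hL1n (aux_comp _ _ hU'n (aux_comp _ _ hnF'
          (aux_comp _ _ hn20' hnE' hD0) hD0) (hDk 4)) (hDk 6)) hD0) hD0).trans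
        (le_of_eq (by ring)))
    calc ‖B₀₀‖ ≤ (C + 1) + (C + 1) ^ 5 + (C + 1) ^ 10 + (C + 1) ^ 5 + (C + 1) ^ 10
        + (C + 1) ^ 15 := by
          rw [hB₀₀]
          refine (norm_add_le _ _).trans (add_le_add ?_ hb6)
          refine (norm_sub_le _ _).trans (add_le_add ?_ hb5)
          refine (norm_add_le _ _).trans (add_le_add ?_ hb4)
          refine (norm_sub_le _ _).trans (add_le_add ?_ hb3)
          exact (norm_add_le _ _).trans (add_le_add hnE' hb2)
      _ ≤ 6 * (C + 1) ^ 15 := by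
          nlinarith [hp 1 (by norm_num), hp 5 (by norm_num), hp 10 (by norm_num)]
  have hnB₀₁ : ‖B₀₁‖ ≤ 6 * (C + 1) ^ 15 * ‖σ‖⁻¹ := by
    have h1 : ‖E ∘L (A₀₂ ∘L L1)‖ ≤ (C + 1) ^ 8 :=
      (aux_comp _ _ hnE' (aux_comp _ _ hn02' hL1n hD0) hD0).trans (le_of_eq (by ring))
    have h2 : ‖E ∘L (A₀₁ ∘L T)‖ ≤ (C + 1) ^ 3 :=
      (aux_comp _ _ hnE' (aux_comp _ _ hn01' hnT' hD0) hD0).trans (le_of_eq (by ring))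
    calc ‖B₀₁‖ ≤ (C + 1) ^ 8 + ‖σ‖⁻¹ * (C + 1) ^ 3 := by
          rw [hB₀₁]
          refine (norm_sub_le _ _).trans (add_le_add h1 ?_)
          refine (ContinuousLinearMap.opNorm_smul_le _ _).trans ?_
          rw [norm_inv]
          exact mul_le_mul_of_nonneg_left h2 hinv0
      _ ≤ 6 * (C + 1) ^ 15 * ‖σ‖⁻¹ :=
          aux_fin1 (hp 8 (by norm_num)) (hp 3 (by norm_num)) hinv (hDk 15)
  have hnB₀₂ : ‖B₀₂‖ ≤ 6 * (C + 1) ^ 15 := by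
    have h1 : ‖E ∘L (A₀₁ ∘L K2)‖ ≤ (C + 1) ^ 8 :=
      (aux_comp _ _ hnE' (aux_comp _ _ hn01' hK2n hD0) hD0).trans (le_of_eq (by ring))
    have h2 : ‖E ∘L (A₀₂ ∘L F)‖ ≤ (C + 1) ^ 3 :=
      (aux_comp _ _ hnE' (aux_comp _ _ hn02' hnF' hD0) hD0).trans (le_of_eq (by ring))
    have h3 : ‖σ • (E ∘L (A₀₂ ∘L (L1 ∘L (U' ∘L F))))‖ ≤ (C + 1) ^ 13 :=
      aux_smul hσ1 ((aux_comp _ _ hnE' (aux_comp _ _ hn02'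
        (aux_comp _ _ hL1n (aux_comp _ _ hU'n hnF' (hDk 4)) (hDk 6)) hD0) hD0).trans
        (le_of_eq (by ring)))
    calc ‖B₀₂‖ ≤ (C + 1) ^ 8 + (C + 1) ^ 3 + (C + 1) ^ 13 := by
          rw [hB₀₂]
          refine (norm_sub_le _ _).trans (add_le_add ?_ h3)
          exact (norm_sub_le _ _).trans (add_le_add h1 h2)
      _ ≤ 6 * (C + 1) ^ 15 := by
          nlinarith [hp 8 (by norm_num), hp 3 (by norm_num), hp 13 (by norm_num)]
  have hnB₁₀ : ‖B₁₀‖ ≤ 6 * (C + 1) ^ 15 * ‖σ‖⁻¹ := by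
    have h1 : ‖K2 ∘L (A₂₀ ∘L E)‖ ≤ (C + 1) ^ 8 :=
      (aux_comp _ _ hK2n (aux_comp _ _ hn20' hnE' hD0) (hDk 6)).trans (le_of_eq (by ring))
    calc ‖B₁₀‖ ≤ (C + 1) ^ 8 + ‖σ‖⁻¹ * (C + 1) ^ 3 := by
          rw [hB₁₀]
          refine (norm_sub_le _ _).trans (add_le_add h1 ?_)
          refine (ContinuousLinearMap.opNorm_smul_le _ _).trans ?_
          rw [norm_inv]
          exact mul_le_mul_of_nonneg_left hK1n hinv0
      _ ≤ 6 * (C + 1) ^ 15 * ‖σ‖⁻¹ :=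
          aux_fin1 (hp 8 (by norm_num)) (hp 3 (by norm_num)) hinv (hDk 15)
  have hnB₁₁ : ‖B₁₁‖ ≤ 6 * (C + 1) ^ 15 * (‖σ‖ ^ 2)⁻¹ := by
    have h0 : (0:ℝ) ≤ (‖σ‖ ^ 2)⁻¹ := inv_nonneg.mpr (by positivity)
    calc ‖B₁₁‖ ≤ (‖σ‖ ^ 2)⁻¹ * ‖T‖ := by
          rw [hB₁₁]
          refine (ContinuousLinearMap.opNorm_smul_le _ _).trans ?_
          rw [norm_inv, norm_pow]
      _ ≤ (‖σ‖ ^ 2)⁻¹ * (6 * (C + 1) ^ 15) := by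
          refine mul_le_mul_of_nonneg_left ?_ h0
          nlinarith [hp 1 (by norm_num), hDk 15]
      _ = 6 * (C + 1) ^ 15 * (‖σ‖ ^ 2)⁻¹ := mul_comm _ _
  have hnB₁₂ : ‖B₁₂‖ ≤ 6 * (C + 1) ^ 15 * ‖σ‖⁻¹ := by
    calc ‖B₁₂‖ ≤ ‖σ‖⁻¹ * ‖K2‖ := by
          rw [hB₁₂, norm_neg]
          refine (ContinuousLinearMap.opNorm_smul_le _ _).trans ?_
          rw [norm_inv]
      _ ≤ ‖σ‖⁻¹ * (C + 1) ^ 6 := mul_le_mul_of_nonneg_left hK2n hinv0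
      _ ≤ 6 * (C + 1) ^ 15 * ‖σ‖⁻¹ := aux_fin3 (hp 6 (by norm_num)) hinv (hDk 15)
  have hnB₂₀ : ‖B₂₀‖ ≤ 6 * (C + 1) ^ 15 := by
    have h1 : ‖L1 ∘L (A₁₀ ∘L E)‖ ≤ (C + 1) ^ 8 :=
      (aux_comp _ _ hL1n (aux_comp _ _ hn10' hnE' hD0) (hDk 6)).trans (le_of_eq (by ring))
    have h2 : ‖F ∘L (A₂₀ ∘L E)‖ ≤ (C + 1) ^ 3 :=
      (aux_comp _ _ hnF' (aux_comp _ _ hn20' hnE' hD0) hD0).trans (le_of_eq (by ring))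
    have h3 : ‖σ • (L1 ∘L (U' ∘L (F ∘L (A₂₀ ∘L E))))‖ ≤ (C + 1) ^ 13 :=
      aux_smul hσ1 ((aux_comp _ _ hL1n (aux_comp _ _ hU'n (aux_comp _ _ hnF'
        (aux_comp _ _ hn20' hnE' hD0) hD0) (hDk 4)) (hDk 6)).trans (le_of_eq (by ring)))
    calc ‖B₂₀‖ ≤ (C + 1) ^ 8 + (C + 1) ^ 3 + (C + 1) ^ 13 := by
          rw [hB₂₀]
          refine (norm_sub_le _ _).trans (add_le_add ?_ h3)
          exact (norm_sub_le _ _).trans (add_le_add h1 h2)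
      _ ≤ 6 * (C + 1) ^ 15 := by
          nlinarith [hp 8 (by norm_num), hp 3 (by norm_num), hp 13 (by norm_num)]
  have hnB₂₁ : ‖B₂₁‖ ≤ 6 * (C + 1) ^ 15 * ‖σ‖⁻¹ := by
    calc ‖B₂₁‖ ≤ ‖σ‖⁻¹ * ‖L1‖ := by
          rw [hB₂₁, norm_neg]
          refine (ContinuousLinearMap.opNorm_smul_le _ _).trans ?_
          rw [norm_inv]
      _ ≤ ‖σ‖⁻¹ * (C + 1) ^ 6 := mul_le_mul_of_nonneg_left hL1n hinv0
      _ ≤ 6 * (C + 1) ^ 15 * ‖σ‖⁻¹ := aux_fin3 (hp 6 (by norm_num)) hinv (hDk 15)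
  have hnB₂₂ : ‖B₂₂‖ ≤ 6 * (C + 1) ^ 15 * ‖σ‖⁻¹ := by
    have h1 : ‖L1 ∘L (U' ∘L F)‖ ≤ (C + 1) ^ 11 :=
      (aux_comp _ _ hL1n (aux_comp _ _ hU'n hnF' (hDk 4)) (hDk 6)).trans (le_of_eq (by ring))
    have hp1 : C + 1 ≤ (C + 1) ^ 15 := by nlinarith [hp 1 (by norm_num)]
    calc ‖B₂₂‖ ≤ ‖σ‖⁻¹ * (C + 1) + (C + 1) ^ 11 := by
          rw [hB₂₂]
          refine (norm_add_le _ _).trans (add_le_add ?_ h1)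
          refine (ContinuousLinearMap.opNorm_smul_le _ _).trans ?_
          rw [norm_inv]
          exact mul_le_mul_of_nonneg_left hnF' hinv0
      _ ≤ 6 * (C + 1) ^ 15 * ‖σ‖⁻¹ := aux_fin2 (hp 11 (by norm_num)) hp1 hinv (hDk 15)
  refine ⟨Function.bijective_iff_has_inverse.mpr
      ⟨fun p => (B₀₀ p.1 + B₀₁ p.2.1 + B₀₂ p.2.2, B₁₀ p.1 + B₁₁ p.2.1 + B₁₂ p.2.2,
        B₂₀ p.1 + B₂₁ p.2.1 + B₂₂ p.2.2), fun p => hbwd p, fun p => hfwd p⟩,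
    B₀₀, B₀₁, B₀₂, B₁₀, B₁₁, B₁₂, B₂₀, B₂₁, B₂₂, hB₁₁, hfwd, hbwd,
    hnB₀₀, hnB₀₂, hnB₂₀, hnB₀₁, hnB₁₀, hnB₁₂, hnB₂₁, hnB₂₂, hnB₁₁⟩
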